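/- arXiv:2304.14760 — 2 statements merged into one kernel-verified Lean document; each statement's English description precedes it below -/
import Mathlib

section
/- Selection semantics of ⊓: for a simple term τ (a conjunction of states of distinct variables), a formula Δ, and a world w, we have w ⊨ ⊓τ·Δ if and only if w ⊨ Δ and every world w' obtained from w by setting some subset of the variables mentioned in τ to their states in τ also satisfies Δ. -/
open scoped Classical

/-- Formulas over finite-domain variables: each variable `X : V` has domain `D X`.
A literal of `X` is (intended to be) a nonempty proper subset of `D X`'s states. -/
inductive Form (V : Type) (D : V → Type) : Type where
  | top : Form V D
  | bot : Form V D
  | lit : (X : V) → Set (D X) → Form V D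
  | neg : Form V D → Form V D
  | and : Form V D → Form V D → Form V D
  | or : Form V D → Form V D → Form V D

namespace Form

variable {V : Type} {D : V → Type}

/-- Satisfaction of a formula by a world. -/
def sat (w : ∀ X, D X) : Form V D → Prop
  | top => True
  | bot => False
  | lit X s => w X ∈ s
  | neg φ => ¬ sat w φ
  | and φ ψ => sat w φ ∧ sat w ψ
  | or φ ψ => sat w φ ∨ sat w ψ

/-- Conditioning `Δ|x` of a formula on state `x` of variable `X`: each `X`-literal
`ℓ` is replaced by `⊤` if `x ∈ ℓ` and by `⊥` otherwise. -/
noncomputable def cond (X : V) (x : D X) : Form V D → Form V D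
  | top => top
  | bot => bot
  | lit Y s => if h : X = Y then (if h ▸ x ∈ s then top else bot) else lit Y s
  | neg φ => neg (cond X x φ)
  | and φ ψ => and (cond X x φ) (cond X x ψ)
  | or φ ψ => or (cond X x φ) (cond X x ψ)

/-- The selection operator `⊓x·Δ := (Δ|x) ∧ Δ`. -/
noncomputable def sel (X : V) (x : D X) (Δ : Form V D) : Form V D :=
  and (cond X x Δ) Δ

/-- Logical equivalence of formulas (same models). -/
def equiv (φ ψ : Form V D) : Prop := ∀ w, sat w φ ↔ sat w ψ

/-- Variable `X` occurs (appears) in the formula. -/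
def occurs (X : V) : Form V D → Prop
  | top => False
  | bot => False
  | lit Y _ => Y = X
  | neg φ => occurs X φ
  | and φ ψ => occurs X φ ∨ occurs X ψ
  | or φ ψ => occurs X φ ∨ occurs X ψ

/-- NNF: negation-free, and every literal is a nonempty proper subset of states. -/
def isNNF : Form V D → Prop
  | top => True
  | bot => True
  | lit _ s => s.Nonempty ∧ s ≠ Set.univ
  | neg _ => False
  | and φ ψ => isNNF φ ∧ isNNF ψ
  | or φ ψ => isNNF φ ∧ isNNF ψ

/-- The `X`-literal `s` occurs in the formula. -/
def litOccurs (X : V) (s : Set (D X)) : Form V D → Prop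
  | top => False
  | bot => False
  | lit Y t => ∃ h : Y = X, h ▸ t = s
  | neg φ => litOccurs X s φ
  | and φ ψ => litOccurs X s φ ∨ litOccurs X s ψ
  | or φ ψ => litOccurs X s φ ∨ litOccurs X s ψ

/-- Every literal in the formula is implied by the instance `I`
(i.e., contains `I`'s state of its variable). -/
def litsImp (I : ∀ X, D X) : Form V D → Prop
  | top => True
  | bot => True
  | lit X s => I X ∈ s
  | neg φ => litsImp I φ
  | and φ ψ => litsImp I φ ∧ litsImp I ψ
  | or φ ψ => litsImp I φ ∧ litsImp I ψ

/-- Iterated selection `⊓` over a list of variables, using states from `v`. -/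
noncomputable def selList (v : ∀ X, D X) : List V → Form V D → Form V D
  | [], Δ => Δ
  | X :: L, Δ => sel X (v X) (selList v L Δ)

/-- The general reason `⊓I·Δ`: selection applied for all states of instance `I`. -/
noncomputable def selAll [Fintype V] (I : ∀ X, D X) (Δ : Form V D) : Form V D :=
  selList I (Finset.univ : Finset V).toList Δ

noncomputable def listAnd : List (Form V D) → Form V D
  | [] => top
  | φ :: L => and φ (listAnd L)

/-- Universal literal quantification `∀x·Δ := (Δ|x) ∧ ⋀_{y ≠ x} (x ∨ Δ|y)`. -/
noncomputable def uq (X : V) [Fintype (D X)] (x : D X) (Δ : Form V D) : Form V D :=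
  letI : DecidableEq (D X) := fun _ _ => Classical.propDecidable _
  and (cond X x Δ)
    (listAnd ((((Finset.univ : Finset (D X)).erase x).toList).map
      (fun y => or (lit X ({x} : Set (D X))) (cond X y Δ))))

/-- Iterated universal literal quantification over a list of variables. -/
noncomputable def uqList [∀ X, Fintype (D X)] (v : ∀ X, D X) : List V → Form V D → Form V D
  | [], Δ => Δ
  | X :: L, Δ => uq X (v X) (uqList v L Δ)

/-- The complete reason `∀I·Δ`. -/
noncomputable def uqAll [Fintype V] [∀ X, Fintype (D X)] (I : ∀ X, D X) (Δ : Form V D) :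
    Form V D :=
  uqList I (Finset.univ : Finset V).toList Δ

end Form

/-- A term: a conjunction of literals over distinct variables. Variable `X` is
mentioned iff `lits X ≠ univ`; each literal is nonempty (terms are consistent). -/
structure MvTerm (V : Type) (D : V → Type) : Type where
  lits : ∀ X, Set (D X)
  nonempty : ∀ X, (lits X).Nonempty

/-- A clause: a disjunction of literals over distinct variables. Variable `X` is
mentioned iff `lits X ≠ ∅`; each literal is proper (clauses are never valid). -/
structure MvClause (V : Type) (D : V → Type) : Type where
  lits : ∀ X, Set (D X)
  proper : ∀ X, lits X ≠ Set.univ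

namespace MvTerm

variable {V : Type} {D : V → Type}

def tsat (w : ∀ X, D X) (τ : MvTerm V D) : Prop := ∀ X, w X ∈ τ.lits X

def vars (τ : MvTerm V D) : Set V := {X | τ.lits X ≠ Set.univ}

/-- A simple term assigns a single state to each of its variables. -/
def simple (τ : MvTerm V D) : Prop :=
  ∀ X, τ.lits X ≠ Set.univ → ∃ x, τ.lits X = ({x} : Set (D X))

end MvTerm

namespace MvClause

variable {V : Type} {D : V → Type}

def csat (w : ∀ X, D X) (σ : MvClause V D) : Prop := ∃ X, w X ∈ σ.lits X

def vars (σ : MvClause V D) : Set V := {X | σ.lits X ≠ (∅ : Set (D X))}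

/-- A simple clause: all its literals are single states. -/
def simple (σ : MvClause V D) : Prop :=
  ∀ X, σ.lits X ≠ (∅ : Set (D X)) → ∃ x, σ.lits X = ({x} : Set (D X))

end MvClause

section PrimeDefs

variable {V : Type} {D : V → Type}

def termImp (τ τ' : MvTerm V D) : Prop := ∀ w, τ.tsat w → τ'.tsat w

def clauseImp (σ σ' : MvClause V D) : Prop := ∀ w, σ.csat w → σ'.csat w

/-- A prime implicant of the set of worlds `M`: a ⊨-maximal term implying `M`. -/
def isPrimeImplicantOf (M : (∀ X, D X) → Prop) (τ : MvTerm V D) : Prop :=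
  (∀ w, τ.tsat w → M w) ∧
  ∀ τ' : MvTerm V D, (∀ w, τ'.tsat w → M w) → termImp τ τ' → τ' = τ

/-- A prime implicate of the set of worlds `M`: a ⊨-minimal clause implied by `M`. -/
def isPrimeImplicateOf (M : (∀ X, D X) → Prop) (σ : MvClause V D) : Prop :=
  (∀ w, M w → σ.csat w) ∧
  ∀ σ' : MvClause V D, (∀ w, M w → σ'.csat w) → clauseImp σ' σ → σ' = σ

/-- Remove subsumed terms: delete any term strictly implied by another in the set. -/
def removeSubsumedT (S : Set (MvTerm V D)) : Set (MvTerm V D) :=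
  {τ ∈ S | ¬ ∃ τ' ∈ S, τ' ≠ τ ∧ termImp τ τ'}

/-- Remove subsumed clauses: delete any clause strictly implying another in the set. -/
def removeSubsumedC (S : Set (MvClause V D)) : Set (MvClause V D) :=
  {σ ∈ S | ¬ ∃ σ' ∈ S, σ' ≠ σ ∧ clauseImp σ' σ}

end PrimeDefs

/-! Conditioning on `X = x` evaluates a formula at the world updated to `x` at `X`, so `⊓x·Δ`
holds at `w` iff `Δ` holds at both `w` and `w[X ↦ x]`. Iterating over the variables of a
simple term, each selection on a new variable doubles the set of worlds that must satisfy `Δ`: after selecting on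
`X₁, …, Xₙ` they are exactly the worlds obtained from `w` by overriding any subset of the
`Xᵢ` with their states in the term. -/

theorem Finset.forall_subset_insert_iff {α : Type*} [DecidableEq α] {p : Finset α → Prop}
    (a : α) (s : Finset α) :
    (∀ u ⊆ insert a s, p u) ↔ (∀ u ⊆ s, p (insert a u)) ∧ ∀ u ⊆ s, p u := by
  simp only [← Finset.mem_powerset, Finset.powerset_insert, Finset.forall_mem_union,
    Finset.forall_mem_image, and_comm]

theorem Finset.piecewise_update_self {ι : Type*} [DecidableEq ι] {π : ι → Type*}
    (s : Finset ι) (f g : ∀ i, π i) (i : ι) :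
    s.piecewise f (Function.update g i (f i)) = (insert i s).piecewise f g := by
  rw [Finset.piecewise_insert, Finset.update_piecewise, Function.update_eq_self]

namespace Form

variable {V : Type} {D : V → Type} [DecidableEq V]

theorem sat_cond (X : V) (x : D X) (Δ : Form V D) (w : ∀ Y, D Y) :
    sat w (cond X x Δ) ↔ sat (Function.update w X x) Δ := by
  induction Δ with
  | top | bot => simp only [cond, sat]
  | lit Y t =>
    by_cases h : X = Y
    · subst h
      by_cases hx : x ∈ t <;> simp [cond, sat, hx]
    · simp [cond, sat, h, Function.update_of_ne (Ne.symm h)]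
  | neg φ ih => simp only [cond, sat, ih]
  | and φ ψ ihφ ihψ | or φ ψ ihφ ihψ => simp only [cond, sat, ihφ, ihψ]

theorem sat_sel (X : V) (x : D X) (Δ : Form V D) (w : ∀ Y, D Y) :
    sat w (sel X x Δ) ↔ sat (Function.update w X x) Δ ∧ sat w Δ := by
  rw [sel, sat, sat_cond]

theorem sat_selList (v w : ∀ X, D X) (L : List V) (Δ : Form V D) :
    sat w (selList v L Δ) ↔ ∀ u ⊆ L.toFinset, sat (u.piecewise v w) Δ := by
  induction L generalizing w with
  | nil => simp [selList]
  | cons Y L ih =>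
    simp only [selList, sat_sel, ih, List.toFinset_cons, Finset.forall_subset_insert_iff,
      Finset.piecewise_update_self]

end Form

/-- selection semantics of `⊓`. For a simple term `τ` (domain `s`,
values `v`), `w ⊨ ⊓τ·Δ` iff `w ⊨ Δ` and every world obtained from `w` by setting
some subset of the variables of `τ` to their states in `τ` satisfies `Δ`. -/
theorem selection_semantics {V : Type} {D : V → Type} [DecidableEq V]
    (Δ : Form V D) (s : Finset V) (v : ∀ X, D X) (w : ∀ X, D X) :
    Form.sat w (Form.selList v s.toList Δ) ↔
      Form.sat w Δ ∧
      ∀ u : Finset V, u ⊆ s →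
        Form.sat (fun X => if X ∈ u then v X else w X) Δ := by
  rw [Form.sat_selList, Finset.toList_toFinset]
  refine ⟨fun h => ⟨?_, h⟩, fun h => h.2⟩
  simpa only [Finset.piecewise_empty] using h ∅ (Finset.empty_subset s)
end

section
/- Every necessary reason is the projection of a general necessary reason: a simple clause σ is a necessary reason for the decision on instance I in class Δ if and only if σ = I ⊓ σ' for some general necessary reason σ', where I ⊓ σ' is the disjunction of states appearing in both I and σ'. -/
open scoped Classical

section NecessaryReasons

variable {V : Type} {D : V → Type}

/-- `I ⊫ σ`: instance `I` implies every literal of clause `σ`. -/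
def instEntailsC (I : ∀ X, D X) (σ : MvClause V D) : Prop :=
  ∀ X, σ.lits X ≠ (∅ : Set (D X)) → I X ∈ σ.lits X

/-- `I ∖ σ`: the largest subterm of `I` that does not imply `σ` (the subterm of
`I` on the variables not mentioned by `σ`). -/
noncomputable def instMinus (I : ∀ X, D X) (σ : MvClause V D) : MvTerm V D where
  lits := fun X =>
    if σ.lits X = (∅ : Set (D X)) then ({I X} : Set (D X)) else Set.univ
  nonempty := by
    intro X
    try dsimp only
    split
    · exact ⟨I X, rfl⟩
    · exact ⟨I X, Set.mem_univ _⟩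

/-- Conditions of a necessary reason (besides being strongest and simple):
`I ⊫ σ` and `(I ∖ σ) ∧ ¬σ ⊭ Δ`. -/
def nrCond (I : ∀ X, D X) (Δ : Form V D) (σ : MvClause V D) : Prop :=
  instEntailsC I σ ∧
  ∃ w, MvTerm.tsat w (instMinus I σ) ∧ ¬ MvClause.csat w σ ∧ ¬ Form.sat w Δ

/-- A necessary reason: a strongest simple clause `σ` with `I ⊫ σ` and
`(I ∖ σ) ∧ ¬σ ⊭ Δ`. -/
def isNR (I : ∀ X, D X) (Δ : Form V D) (σ : MvClause V D) : Prop :=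
  MvClause.simple σ ∧ nrCond I Δ σ ∧
  ∀ σ' : MvClause V D, MvClause.simple σ' → nrCond I Δ σ' →
    clauseImp σ' σ → σ' = σ

/-- Conditions of a general necessary reason: `I ⊫ σ` and `(I ∖ σ) ∧ ¬σ ⊨ ¬Δ`. -/
def gnrCond (I : ∀ X, D X) (Δ : Form V D) (σ : MvClause V D) : Prop :=
  instEntailsC I σ ∧
  ∀ w, MvTerm.tsat w (instMinus I σ) → ¬ MvClause.csat w σ → ¬ Form.sat w Δ

/-- A strongest clause satisfying the general-necessary-reason conditions. -/
def strongestGNR (I : ∀ X, D X) (Δ : Form V D) (σ : MvClause V D) : Prop :=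
  gnrCond I Δ σ ∧
  ∀ σ' : MvClause V D, gnrCond I Δ σ' → clauseImp σ' σ → σ' = σ

/-- A general necessary reason: a strongest clause with `I ⊫ σ` and
`(I ∖ σ) ∧ ¬σ ⊨ ¬Δ`, variable-minimal among such strongest clauses. -/
def isGNR (I : ∀ X, D X) (Δ : Form V D) (σ : MvClause V D) : Prop :=
  strongestGNR I Δ σ ∧
  ¬ ∃ σ' : MvClause V D, strongestGNR I Δ σ' ∧ MvClause.vars σ' ⊂ MvClause.vars σ

/-- `I ⊓ σ'`: the disjunction of states appearing in both `I` and `σ'`. -/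
def projClause (I : ∀ X, D X) (σ' : MvClause V D) : MvClause V D where
  lits := fun X => σ'.lits X ∩ ({I X} : Set (D X))
  proper := by
    intro X h
    apply σ'.proper X
    apply Set.eq_univ_of_univ_subset
    intro x hx
    have hx' : x ∈ σ'.lits X ∩ ({I X} : Set (D X)) := by
      rw [show σ'.lits X ∩ ({I X} : Set (D X)) = Set.univ from h]; trivial
    exact hx'.1

end NecessaryReasons

/-!
For a clause `σ` entailed by `I`, the worlds of `(I ∖ σ) ∧ ¬σ` are those that agree with `I` off
the variables of `σ` and avoid `σ` on them. When `σ` is simple this says that some world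
differing from `I` on every variable of `σ`, and agreeing with it elsewhere, falsifies `Δ`: the
variables of `σ` form a *flip set*. Necessary reasons are therefore the simple clauses of `I` on
the minimal flip sets.

The variables of a general reason form a flip set (pick states outside its literals), and
conversely every flip set contains the variables of a strongest general reason, by Zorn's lemma
(only the finitely many variables of `Δ` matter, and this makes the intersection of a chain of
general reasons again a general reason). Hence the variable-minimal strongest general
reasons `σ'` are exactly those whose variables form a minimal flip set, and `I ⊓ σ'` is the
simple clause of `I` on these variables.
-/

namespace Form

variable {V : Type} {D : V → Type}

theorem finite_setOf_occurs (φ : Form V D) : {X | Form.occurs X φ}.Finite := by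
  induction φ with
  | top | bot => exact Set.finite_empty.subset fun _ h => h
  | lit Y _ => exact (Set.finite_singleton Y).subset fun _ (h : Y = _) => h.symm
  | neg _ ih => exact ih
  | and _ _ ih₁ ih₂ | or _ _ ih₁ ih₂ => exact (ih₁.union ih₂).subset fun _ h => h

theorem sat_congr {w w' : ∀ X, D X} :
    ∀ {φ : Form V D}, (∀ X, Form.occurs X φ → w X = w' X) → (sat w φ ↔ sat w' φ)
  | top, _ | bot, _ => Iff.rfl
  | lit Y _, h => by simp only [sat, h Y rfl]
  | neg _, h => not_congr (sat_congr h)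
  | and _ _, h =>
    and_congr (sat_congr fun X hX => h X (.inl hX)) (sat_congr fun X hX => h X (.inr hX))
  | or _ _, h =>
    or_congr (sat_congr fun X hX => h X (.inl hX)) (sat_congr fun X hX => h X (.inr hX))

end Form

namespace MvClause

variable {V : Type} {D : V → Type}

theorem lits_injective : Function.Injective (lits : MvClause V D → ∀ X, Set (D X))
  | ⟨_, _⟩, ⟨_, _⟩, rfl => rfl

instance : PartialOrder (MvClause V D) := PartialOrder.lift lits lits_injective

theorem exists_notMem_lits (σ : MvClause V D) (X : V) : ∃ x, x ∉ σ.lits X :=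
  (Set.ne_univ_iff_exists_notMem _).mp (σ.proper X)

theorem notMem_vars {σ : MvClause V D} {X : V} : X ∉ σ.vars ↔ σ.lits X = ∅ := not_not

theorem not_csat_iff {w : ∀ X, D X} {σ : MvClause V D} : ¬ σ.csat w ↔ ∀ X, w X ∉ σ.lits X :=
  not_exists

theorem vars_mono {σ τ : MvClause V D} (h : σ ≤ τ) : σ.vars ⊆ τ.vars :=
  fun X hX hτ => hX (Set.subset_empty_iff.mp (hτ ▸ h X))

def restrict (σ : MvClause V D) (S : Set V) : MvClause V D where
  lits X := if X ∈ S then σ.lits X else ∅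
  proper X := by
    split_ifs
    · exact σ.proper X
    · obtain ⟨x, -⟩ := σ.exists_notMem_lits X
      exact (Set.nonempty_of_mem (Set.mem_univ x)).ne_empty.symm

@[simp]
theorem restrict_lits (σ : MvClause V D) (S : Set V) (X : V) :
    (σ.restrict S).lits X = if X ∈ S then σ.lits X else ∅ := rfl

theorem restrict_le (σ : MvClause V D) (S : Set V) : σ.restrict S ≤ σ := fun X => by
  by_cases hX : X ∈ S <;> simp [hX]

theorem vars_restrict (σ : MvClause V D) (S : Set V) : (σ.restrict S).vars = S ∩ σ.vars := by
  ext X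
  by_cases hX : X ∈ S <;> simp [vars, hX]

theorem simple_restrict {σ : MvClause V D} (hσ : σ.simple) (S : Set V) : (σ.restrict S).simple :=
  fun X hX => by
    by_cases hXS : X ∈ S
    · simp only [restrict_lits, hXS, if_true] at hX ⊢
      exact hσ X hX
    · simp [hXS] at hX

end MvClause

section Clauses

variable {V : Type} {D : V → Type}

open MvClause

theorem clauseImp_iff_le {σ τ : MvClause V D} : clauseImp σ τ ↔ σ ≤ τ := by
  refine ⟨fun h X x hx => ?_, fun h w ⟨X, hX⟩ => ⟨X, h X hX⟩⟩
  by_contra hxτ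
  choose y hy using τ.exists_notMem_lits
  obtain ⟨Y, hY⟩ := h (Function.update y X x) ⟨X, by simpa using hx⟩
  by_cases hYX : Y = X
  · subst hYX
    simp only [Function.update_self] at hY
    exact hxτ hY
  · rw [Function.update_of_ne hYX] at hY
    exact hy Y hY

theorem instEntailsC_restrict {I : ∀ X, D X} {σ : MvClause V D} (hI : instEntailsC I σ)
    (S : Set V) : instEntailsC I (σ.restrict S) := fun X hX => by
  by_cases hXS : X ∈ S
  · simp only [restrict_lits, hXS, if_true] at hX ⊢
    exact hI X hX
  · simp [hXS] at hX

theorem lits_eq_singleton {I : ∀ X, D X} {σ : MvClause V D} (hs : σ.simple)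
    (hI : instEntailsC I σ) {X : V} (hX : σ.lits X ≠ ∅) : σ.lits X = {I X} := by
  obtain ⟨x, hx⟩ := hs X hX
  have hIx := hI X hX
  rw [hx, Set.mem_singleton_iff] at hIx
  rw [hx, hIx]

theorem le_of_vars_subset {I : ∀ X, D X} {σ τ : MvClause V D} (hσ : σ.simple)
    (hIσ : instEntailsC I σ) (hIτ : instEntailsC I τ) (h : σ.vars ⊆ τ.vars) : σ ≤ τ := by
  intro X
  by_cases hX : σ.lits X = ∅
  · simp [hX]
  · rw [lits_eq_singleton hσ hIσ hX, Set.singleton_subset_iff]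
    exact hIτ X (h hX)

theorem eq_of_vars_eq {I : ∀ X, D X} {σ τ : MvClause V D} (hσ : σ.simple) (hτ : τ.simple)
    (hIσ : instEntailsC I σ) (hIτ : instEntailsC I τ) (h : σ.vars = τ.vars) : σ = τ :=
  le_antisymm (le_of_vars_subset hσ hIσ hIτ h.subset) (le_of_vars_subset hτ hIτ hIσ h.symm.subset)

theorem simple_projClause (I : ∀ X, D X) (σ : MvClause V D) : (projClause I σ).simple :=
  fun X hX => ⟨I X, (Set.subset_singleton_iff_eq.mp Set.inter_subset_right).resolve_left hX⟩

theorem instEntailsC_projClause (I : ∀ X, D X) (σ : MvClause V D) :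
    instEntailsC I (projClause I σ) :=
  fun X hX => by
    obtain ⟨x, hx, rfl⟩ := Set.nonempty_iff_ne_empty.mpr hX
    exact ⟨hx, rfl⟩

theorem vars_projClause {I : ∀ X, D X} {σ : MvClause V D} (hI : instEntailsC I σ) :
    (projClause I σ).vars = σ.vars := by
  ext X
  refine ⟨fun hX => vars_mono (fun _ => Set.inter_subset_left) hX, fun hX => ?_⟩
  exact Set.nonempty_iff_ne_empty.mp ⟨I X, hI X hX, rfl⟩

theorem tsat_instMinus_iff {I w : ∀ X, D X} {σ : MvClause V D} :
    (instMinus I σ).tsat w ↔ ∀ X, σ.lits X = ∅ → w X = I X := by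
  refine forall_congr' fun X => ?_
  by_cases hX : σ.lits X = ∅ <;> simp [instMinus, hX]

theorem gnrCond_iff {I : ∀ X, D X} {Δ : Form V D} {σ : MvClause V D} :
    gnrCond I Δ σ ↔ instEntailsC I σ ∧ ∀ w : ∀ X, D X,
      (∀ X, σ.lits X = ∅ → w X = I X) → (∀ X, w X ∉ σ.lits X) → ¬ Form.sat w Δ := by
  simp only [gnrCond, tsat_instMinus_iff, not_csat_iff]

theorem strongestGNR_iff_minimal {I : ∀ X, D X} {Δ : Form V D} {σ : MvClause V D} :
    strongestGNR I Δ σ ↔ Minimal (gnrCond I Δ) σ := by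
  simp only [strongestGNR, minimal_iff, clauseImp_iff_le, eq_comm]

end Clauses

section FlipSets

variable {V : Type} {D : V → Type} {Δ : Form V D} {I : ∀ X, D X}

open MvClause

def IsFlipSet (Δ : Form V D) (I : ∀ X, D X) (S : Set V) : Prop :=
  ∃ w : ∀ X, D X, (∀ X ∉ S, w X = I X) ∧ (∀ X ∈ S, w X ≠ I X) ∧ ¬ Form.sat w Δ

theorem nrCond_iff_isFlipSet {σ : MvClause V D} (hs : σ.simple) (hI : instEntailsC I σ) :
    nrCond I Δ σ ↔ IsFlipSet Δ I σ.vars := by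
  simp only [nrCond, hI, true_and, tsat_instMinus_iff, not_csat_iff, IsFlipSet,
    notMem_vars]
  refine exists_congr fun w => and_congr_right' (and_congr_left' (forall_congr' fun X => ?_))
  by_cases hX : σ.lits X = ∅
  · simp [hX, MvClause.vars]
  · simp [lits_eq_singleton hs hI hX, MvClause.vars]

theorem gnrCond.isFlipSet {σ : MvClause V D} (h : gnrCond I Δ σ) : IsFlipSet Δ I σ.vars := by
  obtain ⟨hI, hbox⟩ := gnrCond_iff.mp h
  choose y hy using σ.exists_notMem_lits
  let w : ∀ X, D X := fun X => if σ.lits X = ∅ then I X else y X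
  have hw : ∀ X, w X ∉ σ.lits X := fun X => by
    by_cases hX : σ.lits X = ∅
    · simp [hX]
    · simpa [w, hX] using hy X
  refine ⟨w, fun X hX => ?_, fun X hX heq => hw X (heq ▸ hI X hX), hbox w (fun X hX => ?_) hw⟩
  · simp [w, notMem_vars.mp hX]
  · simp [w, hX]

theorem IsFlipSet.inter_occurs {S : Set V} (h : IsFlipSet Δ I S) :
    IsFlipSet Δ I (S ∩ {X | Form.occurs X Δ}) := by
  obtain ⟨w, hoff, hon, hΔ⟩ := h
  refine ⟨fun X => if X ∈ S ∩ {X | Form.occurs X Δ} then w X else I X,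
    fun X hX => if_neg hX, fun X hX => by simpa [hX] using hon X hX.1, fun hsat => hΔ ?_⟩
  refine (Form.sat_congr fun X hX => ?_).mpr hsat
  by_cases hXS : X ∈ S
  · simp [hXS, hX]
  · simp [hXS, hoff X hXS]

theorem isNR_iff {σ : MvClause V D} :
    isNR I Δ σ ↔ σ.simple ∧ instEntailsC I σ ∧ Minimal (IsFlipSet Δ I) σ.vars := by
  constructor
  · rintro ⟨hs, hnr, hmax⟩
    refine ⟨hs, hnr.1, (nrCond_iff_isFlipSet hs hnr.1).mp hnr, fun S hS hSσ => ?_⟩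
    have hvars : (σ.restrict S).vars = S := by
      rw [vars_restrict, Set.inter_eq_left.mpr hSσ]
    have hσS : σ.restrict S = σ := by
      refine hmax _ (simple_restrict hs S) ?_ (clauseImp_iff_le.mpr (σ.restrict_le S))
      rwa [nrCond_iff_isFlipSet (simple_restrict hs S) (instEntailsC_restrict hnr.1 S),
        hvars]
    rw [← hvars, hσS]
  · rintro ⟨hs, hI, hmin⟩
    refine ⟨hs, (nrCond_iff_isFlipSet hs hI).mpr hmin.1, fun τ hτs hτ hτσ => ?_⟩
    have hτσ := clauseImp_iff_le.mp hτσ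
    have hvars : τ.vars = σ.vars :=
      hmin.eq_of_subset ((nrCond_iff_isFlipSet hτs hτ.1).mp hτ) (vars_mono hτσ)
    exact le_antisymm hτσ (le_of_vars_subset hs hI hτ.1 hvars.symm.subset)

/-- The lower bound is the intersection of the chain: a world avoiding all its literals avoids,
on the finitely many variables of `S`, all literals of a single member of the chain. -/
theorem exists_gnrCond_lowerBound {S : Set V} (hS : S.Finite) {c : Set (MvClause V D)}
    (hc : c ⊆ {σ | gnrCond I Δ σ ∧ σ.vars ⊆ S}) (hchain : IsChain (· ≤ ·) c) {B : MvClause V D}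
    (hB : B ∈ c) : ∃ lb, (gnrCond I Δ lb ∧ lb.vars ⊆ S) ∧ ∀ σ ∈ c, lb ≤ σ := by
  let lb : MvClause V D := ⟨fun X => ⋂ σ ∈ c, σ.lits X,
    fun X h => B.proper X (Set.eq_univ_of_univ_subset (h ▸ Set.biInter_subset_of_mem hB))⟩
  have hlb : ∀ σ ∈ c, lb ≤ σ := fun σ hσ X => Set.biInter_subset_of_mem hσ
  have hcond : ∀ σ ∈ c, _ := fun σ hσ => gnrCond_iff.mp (hc hσ).1
  refine ⟨lb, ⟨gnrCond_iff.mpr ⟨fun X hX => ?_, fun w hoff hout hsat => ?_⟩,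
    (vars_mono (hlb B hB)).trans (hc hB).2⟩, hlb⟩
  · exact Set.mem_iInter₂.mpr fun σ hσ => (hcond σ hσ).1 X (vars_mono (hlb σ hσ) hX)
  let E : MvClause V D → Set V := fun σ => {X | w X ∉ σ.lits X}
  have hdir : DirectedOn (fun σ τ => E σ ⊆ E τ) c := fun σ hσ τ hτ => by
    rcases hchain.total hσ hτ with h | h
    · exact ⟨σ, hσ, subset_rfl, fun X hX hm => hX (h X hm)⟩
    · exact ⟨τ, hτ, fun X hX hm => hX (h X hm), subset_rfl⟩
  have hcover : (hS.toFinset : Set V) ⊆ ⋃ σ ∈ c, E σ := fun X _ => by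
    simpa [E, lb] using hout X
  obtain ⟨τ, hτ, hτS⟩ := hdir.exists_mem_subset_of_finset_subset_biUnion ⟨B, hB⟩ hcover
  rw [hS.coe_toFinset] at hτS
  refine (hcond τ hτ).2 w (fun X hX => hoff X ?_) (fun X => ?_) hsat
  · exact Set.subset_empty_iff.mp (hX ▸ hlb τ hτ X)
  · by_cases hXS : X ∈ S
    · exact hτS hXS
    · rw [notMem_vars.mp fun hX => hXS ((hc hτ).2 hX)]
      exact Set.notMem_empty _

theorem exists_strongestGNR_of_finite {S : Set V} (hS : S.Finite) (h : IsFlipSet Δ I S) :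
    ∃ σ, strongestGNR I Δ σ ∧ σ.vars ⊆ S := by
  obtain ⟨w₀, hoff, hon, hΔ⟩ := h
  -- `w₀` is the only world agreeing with `I` off `S` and avoiding `avoid.restrict S`
  let avoid : MvClause V D :=
    ⟨fun X => {w₀ X}ᶜ, fun X => Set.compl_ne_univ.mpr (Set.singleton_nonempty _)⟩
  have hσ₀ : gnrCond I Δ (avoid.restrict S) ∧ (avoid.restrict S).vars ⊆ S := by
    refine ⟨gnrCond_iff.mpr ⟨fun X hX => ?_, fun w hw hout => ?_⟩, by
      rw [vars_restrict]; exact Set.inter_subset_left⟩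
    · by_cases hXS : X ∈ S
      · simpa [hXS, avoid] using (hon X hXS).symm
      · simp [hXS] at hX
    · convert hΔ
      funext X
      by_cases hXS : X ∈ S
      · simpa [hXS, avoid] using hout X
      · rw [hw X (by simp [hXS]), hoff X hXS]
  obtain ⟨m, -, hm⟩ := zorn_le_nonempty₀ (α := (MvClause V D)ᵒᵈ)
    {σ | gnrCond I Δ σ ∧ σ.vars ⊆ S}
    (fun c hc hchain B hB => exists_gnrCond_lowerBound hS hc hchain.symm hB) _ hσ₀
  refine ⟨m, strongestGNR_iff_minimal.mpr ⟨hm.prop.1, fun τ hτ hτm => ?_⟩, hm.prop.2⟩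
  exact hm.2 ⟨hτ, (vars_mono hτm).trans hm.prop.2⟩ hτm

theorem IsFlipSet.exists_strongestGNR {S : Set V} (h : IsFlipSet Δ I S) :
    ∃ σ, strongestGNR I Δ σ ∧ σ.vars ⊆ S :=
  (exists_strongestGNR_of_finite ((Form.finite_setOf_occurs Δ).subset Set.inter_subset_right)
    h.inter_occurs).imp fun _ hσ => ⟨hσ.1, hσ.2.trans Set.inter_subset_left⟩

theorem isGNR.minimal_isFlipSet {σ : MvClause V D} (h : isGNR I Δ σ) :
    Minimal (IsFlipSet Δ I) σ.vars := by
  obtain ⟨hstrong, hvmin⟩ := h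
  refine ⟨hstrong.1.isFlipSet, fun S hS hSσ => ?_⟩
  obtain ⟨τ, hτ, hτS⟩ := hS.exists_strongestGNR
  have hvars : τ.vars = σ.vars :=
    LE.le.eq_of_not_ssubset (hτS.trans hSσ) fun hss => hvmin ⟨τ, hτ, hss⟩
  exact hvars ▸ hτS

theorem exists_isGNR_of_minimal {S : Set V} (h : Minimal (IsFlipSet Δ I) S) :
    ∃ σ, isGNR I Δ σ ∧ σ.vars = S := by
  obtain ⟨σ, hσ, hσS⟩ := h.prop.exists_strongestGNR
  have hvars : σ.vars = S := h.eq_of_subset hσ.1.isFlipSet hσS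
  refine ⟨σ, ⟨hσ, fun ⟨τ, hτ, hτσ⟩ => hτσ.ne ?_⟩, hvars⟩
  exact h.eq_of_subset hτ.1.isFlipSet (hvars ▸ hτσ.subset) |>.trans hvars.symm

end FlipSets

theorem nr_iff_projection_of_gnr_general {V : Type} {D : V → Type}
    (Δ : Form V D) (I : ∀ X, D X)
    (σ : MvClause V D) :
    isNR I Δ σ ↔ ∃ σ' : MvClause V D, isGNR I Δ σ' ∧ σ = projClause I σ' := by
  rw [isNR_iff]
  constructor
  · rintro ⟨hs, hI, hmin⟩
    obtain ⟨σ', hσ', hvars⟩ := exists_isGNR_of_minimal hmin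
    have hI' : instEntailsC I σ' := hσ'.1.1.1
    refine ⟨σ', hσ', eq_of_vars_eq hs (simple_projClause I σ') hI (instEntailsC_projClause I σ') ?_⟩
    rw [vars_projClause hI', hvars]
  · rintro ⟨σ', hσ', rfl⟩
    have hI' : instEntailsC I σ' := hσ'.1.1.1
    refine ⟨simple_projClause I σ', instEntailsC_projClause I σ', ?_⟩
    rw [vars_projClause hI']
    exact hσ'.minimal_isFlipSet

/-- a simple clause `σ` is a necessary reason for the decision on
instance `I` in class `Δ` iff `σ = I ⊓ σ'` for some general necessary reason `σ'`. -/
theorem nr_iff_projection_of_gnr {V : Type} {D : V → Type}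
    (Δ : Form V D) (I : ∀ X, D X) (hI : Form.sat I Δ)
    (σ : MvClause V D) (hσ : MvClause.simple σ) :
    isNR I Δ σ ↔ ∃ σ' : MvClause V D, isGNR I Δ σ' ∧ σ = projClause I σ' :=
  nr_iff_projection_of_gnr_general Δ I σ
end
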